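/- Let A be an associative algebra over Q with Hasse-Schmidt derivation (id, d_1, d_2, ...), and let ∂_n = Σ_{r_1+...+r_m=n} (-1)^{m+1} d_{r_1}...d_{r_m}/m. Then d_n = Σ_{r_1+...+r_m=n} ∂_{r_1} ∂_{r_2} ... ∂_{r_m} / m!, summed over all compositions of n. -/

import Mathlib

/-!
Write `L = log (1 + X) = ∑ logCoeff b • X ^ b`. Expanding every `D r` of the right-hand side into
products of the `d`'s and regrouping by `Composition.sigmaEquivSigmaPi` (the bookkeeping of a
composite of power series), the coefficient of `d α₁ ⋯ d αₘ` is the coefficient of `X ^ m` in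
`exp L = 1 + X`, i.e. `1` for `m = 1` and `0` for `m ≥ 2`.

The identity `exp L = 1 + X` is checked on coefficients. Cyclic rotations of a composition of `n`
of length `m` show that `n` times the coefficient of `X ^ n` in `L ^ m` is `m` times the same sum
weighted by the first block; this is `(L ^ m)' = m L ^ (m - 1) L'`, and it turns into the
recursion `n Eₙ = ∑_{k < n} (-1) ^ (n - k + 1) E_k` for `exp L = ∑ Eₙ X ^ n`, which is
`(exp L)' = exp L / (1 + X)`.
-/

open Finset Nat

namespace Composition

variable {n k : ℕ}

def rotate (c : Composition n) (i : ℕ) : Composition n where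
  blocks := c.blocks.rotate i
  blocks_pos h := c.blocks_pos ((c.blocks.rotate_perm i).mem_iff.mp h)
  blocks_sum := (c.blocks.rotate_perm i).sum_eq.trans c.blocks_sum

@[simp]
lemma rotate_blocks (c : Composition n) (i : ℕ) : (c.rotate i).blocks = c.blocks.rotate i := rfl

@[simp]
lemma length_rotate (c : Composition n) (i : ℕ) : (c.rotate i).length = c.length :=
  c.blocks.length_rotate i

lemma rotate_rotate (c : Composition n) (i j : ℕ) : (c.rotate i).rotate j = c.rotate (i + j) :=
  Composition.ext (c.blocks.rotate_rotate i j)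

lemma rotate_length (c : Composition n) : c.rotate c.length = c :=
  Composition.ext c.blocks.rotate_length

lemma getD_zero_rotate_blocks (c : Composition n) {i : ℕ} (hi : i < c.length) :
    (c.rotate i).blocks.getD 0 0 = c.blocks.getD i 0 := by
  have h : 0 < (c.blocks.rotate i).length := by
    rw [List.length_rotate]; exact Nat.zero_lt_of_lt hi
  rw [rotate_blocks, List.getD_eq_getElem _ _ h, List.getElem_rotate, List.getD_eq_getElem _ _ hi]
  simp [Nat.mod_eq_of_lt hi]

lemma natCast_eq_sum_range_getD (c : Composition n) {R : Type*} [Semiring R] :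
    (n : R) = ∑ i ∈ range c.length, (c.blocks.getD i 0 : R) := by
  conv_lhs => rw [← c.sum_blocksFun, Nat.cast_sum]
  rw [Finset.sum_range]
  exact Finset.sum_congr rfl fun i _ => by rw [List.getD_eq_getElem]; rfl

/-- Rotating `c` by `i` moves its `i`-th block to the front. -/
theorem natCast_mul_sum_eq_sum_length_mul_getD_zero {R : Type*} [CommSemiring R]
    (G : List ℕ → R) (hG : ∀ l i, G (l.rotate i) = G l) :
    (n : R) * ∑ c : Composition n, G c.blocks
      = ∑ c : Composition n, c.length * c.blocks.getD 0 0 * G c.blocks := by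
  calc (n : R) * ∑ c : Composition n, G c.blocks
      = ∑ x ∈ univ.sigma fun c : Composition n => range c.length,
          (x.1.blocks.getD x.2 0 : R) * G x.1.blocks := by
        simp_rw [sum_sigma, mul_sum, ← sum_mul, ← natCast_eq_sum_range_getD]
    _ = ∑ x ∈ univ.sigma fun c : Composition n => range c.length,
          (x.1.blocks.getD 0 0 : R) * G x.1.blocks := by
        refine Finset.sum_nbij' (fun x => ⟨x.1.rotate x.2, x.2⟩)
          (fun x => ⟨x.1.rotate (x.1.length - x.2), x.2⟩) ?_ ?_ ?_ ?_ ?_ <;>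
          simp only [mem_sigma, mem_univ, mem_range, true_and, length_rotate, rotate_rotate,
            Sigma.forall]
        · exact fun _ _ => id
        · intro _ _ _; omega
        · intro c i hi; rw [Nat.add_sub_cancel' hi.le, rotate_length]
        · intro c i hi; rw [Nat.sub_add_cancel hi.le, rotate_length]
        · intro c i hi; rw [getD_zero_rotate_blocks c hi, rotate_blocks, hG]
    _ = ∑ c : Composition n, c.length * c.blocks.getD 0 0 * G c.blocks := by
        simp_rw [sum_sigma, sum_const, card_range, nsmul_eq_mul, mul_assoc]

def tail (c : Composition n) : Composition (n - c.blocks.getD 0 0) where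
  blocks := c.blocks.tail
  blocks_pos h := c.blocks_pos (List.mem_of_mem_tail h)
  blocks_sum := by
    rcases c with ⟨_ | ⟨b, l⟩, -, rfl⟩ <;> simp

def prepend (c : Composition k) (h : k < n) : Composition n where
  blocks := (n - k) :: c.blocks
  blocks_pos hb := by
    rcases List.mem_cons.mp hb with rfl | hb
    · exact Nat.sub_pos_of_lt h
    · exact c.blocks_pos hb
  blocks_sum := by rw [List.sum_cons, c.blocks_sum, Nat.sub_add_cancel h.le]

lemma exists_blocks_eq_cons (hn : 0 < n) (c : Composition n) :
    ∃ b l, c.blocks = b :: l ∧ 0 < b ∧ b ≤ n := by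
  obtain ⟨b, l, hc⟩ := List.exists_cons_of_ne_nil (c.blocks_eq_nil.not.mpr hn.ne')
  exact ⟨b, l, hc, c.blocks_pos (hc ▸ List.mem_cons_self), c.blocks_le (hc ▸ List.mem_cons_self)⟩

lemma sub_getD_zero_blocks_lt (hn : 0 < n) (c : Composition n) : n - c.blocks.getD 0 0 < n := by
  obtain ⟨b, l, hc, hb, -⟩ := c.exists_blocks_eq_cons hn
  rw [hc, List.getD_cons_zero]
  omega

lemma cons_tail_blocks (hn : 0 < n) (c : Composition n) :
    (n - (n - c.blocks.getD 0 0)) :: c.tail.blocks = c.blocks := by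
  obtain ⟨b, l, hc, -, hb⟩ := c.exists_blocks_eq_cons hn
  simp only [tail, hc, List.getD_cons_zero, List.tail_cons, Nat.sub_sub_self hb]

theorem sum_eq_sum_range_sum_cons {M : Type*} [AddCommMonoid M] (hn : 0 < n)
    (F : List ℕ → M) :
    ∑ c : Composition n, F c.blocks
      = ∑ k ∈ range n, ∑ c : Composition k, F ((n - k) :: c.blocks) := by
  rw [sum_sigma']
  refine sum_bij' (fun c _ => ⟨_, c.tail⟩)
    (fun x hx => x.2.prepend (mem_range.mp (mem_sigma.mp hx).1)) ?_ ?_ ?_ ?_ ?_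
  · intro c _
    exact mem_sigma.mpr ⟨mem_range.mpr (c.sub_getD_zero_blocks_lt hn), mem_univ _⟩
  · intro _ _; exact mem_univ _
  · intro c _; exact Composition.ext (cons_tail_blocks hn c)
  · intro x _; exact Composition.sigma_eq_iff_blocks_eq.mpr rfl
  · intro c _; rw [cons_tail_blocks hn c]

end Composition

/-- The coefficients of `log (1 + X)`; the junk value `1 / 0 = 0` is the right constant term. -/
def logCoeff (b : ℕ) : ℚ := (-1) ^ (b + 1) / b

/-- The coefficient of `X ^ n` in `exp (log (1 + X)) = ∑ₘ (log (1 + X)) ^ m / m!`. -/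
def expLogCoeff (n : ℕ) : ℚ :=
  ∑ c : Composition n, (c.length ! : ℚ)⁻¹ * (c.blocks.map logCoeff).prod

lemma map_logCoeff_prod_rotate (l : List ℕ) (i : ℕ) :
    ((l.rotate i).map logCoeff).prod = (l.map logCoeff).prod :=
  ((l.rotate_perm i).map logCoeff).prod_eq

lemma natCast_mul_logCoeff {b : ℕ} (hb : 0 < b) : (b : ℚ) * logCoeff b = (-1) ^ (b + 1) := by
  rw [logCoeff, mul_div_cancel₀]
  exact_mod_cast hb.ne'

theorem natCast_mul_expLogCoeff {n : ℕ} (hn : 0 < n) :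
    n * expLogCoeff n = ∑ k ∈ range n, (-1) ^ (n - k + 1) * expLogCoeff k := by
  rw [expLogCoeff, Composition.natCast_mul_sum_eq_sum_length_mul_getD_zero
    (fun l => (l.length ! : ℚ)⁻¹ * (l.map logCoeff).prod)
    (fun l i => by rw [List.length_rotate, map_logCoeff_prod_rotate]),
    Composition.sum_eq_sum_range_sum_cons hn
    (fun l => l.length * l.getD 0 0 * ((l.length ! : ℚ)⁻¹ * (l.map logCoeff).prod))]
  refine sum_congr rfl fun k hk => ?_
  rw [expLogCoeff, mul_sum]
  refine sum_congr rfl fun c _ => ?_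
  have hnk : 0 < n - k := Nat.sub_pos_of_lt (mem_range.mp hk)
  simp only [List.length_cons, List.getD_cons_zero, List.map_cons, List.prod_cons, factorial_succ]
  rw [← natCast_mul_logCoeff hnk]
  push_cast
  field_simp

lemma expLogCoeff_zero : expLogCoeff 0 = 1 := by
  have h (c : Composition 0) : c.blocks = [] := c.blocks_eq_nil.mpr rfl
  simp [expLogCoeff, Composition.length, h, composition_card]

theorem expLogCoeff_eq (n : ℕ) : expLogCoeff n = if n ≤ 1 then 1 else 0 := by
  induction n using Nat.strong_induction_on with
  | _ n ih =>
    rcases n with _ | _ | m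
    · exact expLogCoeff_zero
    · simpa [expLogCoeff_zero] using natCast_mul_expLogCoeff one_pos
    · have h := natCast_mul_expLogCoeff (n := m + 2) (by omega)
      have hhigh : ∑ k ∈ range m,
          (-1 : ℚ) ^ (m + 2 - (k + 1 + 1) + 1) * expLogCoeff (k + 1 + 1) = 0 :=
        sum_eq_zero fun k hk => by rw [ih (k + 2) (by simp at hk; omega)]; simp
      rw [sum_range_succ', sum_range_succ', hhigh, ih 1 (by omega), ih 0 (by omega)] at h
      rw [if_neg (by omega)]
      have h0 : ((m + 2 : ℕ) : ℚ) * expLogCoeff (m + 2) = 0 := by rw [h]; norm_num [pow_succ]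
      exact (mul_eq_zero.mp h0).resolve_left (by positivity)

section Operators

variable {M : Type*} [AddCommGroup M] [Module ℚ M] {d D : ℕ → AddMonoid.End M} {w : ℕ → ℚ}

theorem list_prod_map_apply_eq_sum
    (hD : ∀ n, 0 < n → ∀ a, D n a = ∑ c : Composition n, w c.length • (c.blocks.map d).prod a)
    (l : List ℕ) (hl : ∀ b ∈ l, 0 < b) (a : M) :
    (l.map D).prod a = ∑ E : (∀ i : Fin l.length, Composition (l.get i)),
      (∏ i, w (E i).length) • ((List.ofFn fun i => (E i).blocks).flatten.map d).prod a := by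
  induction l generalizing a with
  | nil => simp
  | cons b t ih =>
    have hb : 0 < b := hl b List.mem_cons_self
    calc ((b :: t).map D).prod a = D b ((t.map D).prod a) := rfl
      _ = ∑ E : (∀ i : Fin t.length, Composition (t.get i)), ∑ e : Composition b,
            (w e.length * ∏ i, w (E i).length) •
              ((e.blocks ++ (List.ofFn fun i => (E i).blocks).flatten).map d).prod a := by
        rw [ih (fun x hx => hl x (List.mem_cons_of_mem _ hx)), map_sum]
        refine sum_congr rfl fun E _ => ?_
        rw [map_rat_smul, hD b hb, smul_sum]
        refine sum_congr rfl fun e _ => ?_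
        rw [smul_smul, mul_comm, List.map_append, List.prod_append]
        rfl
      _ = ∑ E : (∀ i : Fin (t.length + 1), Composition ((b :: t).get i)),
            (∏ i, w (E i).length) • ((List.ofFn fun i => (E i).blocks).flatten.map d).prod a := by
        rw [sum_comm]
        refine (Fintype.sum_prod_type' _).symm.trans (Fintype.sum_equiv
          (Fin.consEquiv fun i : Fin (t.length + 1) => Composition ((b :: t).get i)) _ _
          fun p => ?_)
        simp only [Fin.consEquiv_apply, Fin.prod_univ_succ, Fin.cons_zero, Fin.cons_succ,
          List.ofFn_succ, List.flatten_cons]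

/-- The coefficients of the composite series `g ∘ w`, applied to the operators `d`. -/
theorem sum_smul_prod_map_apply_eq_sum_comp
    (hD : ∀ n, 0 < n → ∀ a, D n a = ∑ c : Composition n, w c.length • (c.blocks.map d).prod a)
    (g : ℕ → ℚ) (n : ℕ) (a : M) :
    ∑ c : Composition n, g c.length • (c.blocks.map D).prod a
      = ∑ α : Composition n,
          (∑ β : Composition α.length, g β.length * (β.blocks.map w).prod) •
            (α.blocks.map d).prod a := by
  calc ∑ c : Composition n, g c.length • (c.blocks.map D).prod a
      = ∑ x : Σ c : Composition n, ∀ i : Fin c.length, Composition (c.blocksFun i),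
          (g x.1.length * ∏ i, w (x.2 i).length) •
            ((List.ofFn fun i => (x.2 i).blocks).flatten.map d).prod a := by
        rw [Fintype.sum_sigma]
        refine sum_congr rfl fun c _ => ?_
        rw [list_prod_map_apply_eq_sum hD _ (fun b hb => c.blocks_pos hb), smul_sum]
        simp_rw [smul_smul]
        rfl
    _ = ∑ y : Σ α : Composition n, Composition α.length,
          (g y.2.length * (y.2.blocks.map w).prod) • (y.1.blocks.map d).prod a := by
        refine Fintype.sum_equiv (Composition.sigmaEquivSigmaPi n).symm _ _ fun ⟨c, E⟩ => ?_
        have hβ : ((Composition.sigmaEquivSigmaPi n).symm ⟨c, E⟩).2.blocks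
            = List.ofFn fun i => (E i).length := rfl
        have hℓ : ((Composition.sigmaEquivSigmaPi n).symm ⟨c, E⟩).2.length = c.length := by
          rw [← Composition.blocks_length, hβ, List.length_ofFn]
        rw [hℓ, hβ, List.map_ofFn, List.prod_ofFn]
        rfl
    _ = _ := by
        simp_rw [Fintype.sum_sigma, sum_smul]

end Operators

theorem stmt_16_general {A : Type*} [Ring A] [Algebra ℚ A]
    (d : ℕ → AddMonoid.End A)
    (D : ℕ → AddMonoid.End A)
    (hD : ∀ n, 1 ≤ n → ∀ a : A,
      D n a = ∑ c : Composition n,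
        ((-1 : ℚ) ^ (c.length + 1) / c.length) • ((c.blocks.map d).prod a)) :
    ∀ n, 1 ≤ n → ∀ a : A,
      d n a = ∑ c : Composition n,
        ((c.length.factorial : ℚ))⁻¹ • ((c.blocks.map D).prod a) := by
  intro n hn a
  rw [sum_smul_prod_map_apply_eq_sum_comp (w := logCoeff) hD (fun m => (m ! : ℚ)⁻¹)]
  simp_rw [← expLogCoeff.eq_1, expLogCoeff_eq, ite_smul, one_smul, zero_smul]
  rw [sum_eq_single (Composition.single n hn)]
  · simp
  · intro c _ hc
    have hpos := c.length_pos_of_pos hn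
    have hne := (Composition.eq_single_iff_length hn).not.mp hc
    rw [if_neg (by omega)]
  · simp

/-- Theorem 5.5 (second part): with
`D n = Σ (-1)^{m+1} d_{r_1} ⋯ d_{r_m} / m` one recovers
`d n = Σ D_{r_1} ⋯ D_{r_m} / m!`, both sums over compositions of `n`. -/
theorem stmt_16 {A : Type*} [Ring A] [Algebra ℚ A]
    (d : ℕ → AddMonoid.End A) (hd0 : d 0 = 1)
    (hHS : ∀ n, 1 ≤ n → ∀ a b : A,
      d n (a * b) = ∑ i ∈ Finset.range (n + 1), d i a * d (n - i) b)
    (D : ℕ → AddMonoid.End A)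
    (hD : ∀ n, 1 ≤ n → ∀ a : A,
      D n a = ∑ c : Composition n,
        ((-1 : ℚ) ^ (c.length + 1) / c.length) • ((c.blocks.map d).prod a)) :
    ∀ n, 1 ≤ n → ∀ a : A,
      d n a = ∑ c : Composition n,
        ((c.length.factorial : ℚ))⁻¹ • ((c.blocks.map D).prod a) :=
  stmt_16_general d D hD
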